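/- arXiv:1106.4387 — 7 statements merged into one kernel-verified Lean document; each statement's English description precedes it below -/
import Mathlib

section
/- Let m > 1, b = (Σ k² p_k − m)/(m(m−1)), and for α < 0 set C_α = b/(1−e^α) + (1−b)/(1−e^α m⁻¹). Then lim_{α↗0} (m C_α⁻¹ e^{−α})/|α| = m²(m−1)/(Σ k² p_k − m). -/
/-!
Near `α = 0⁻` the first term of `C_α` blows up like `b / |α|` while the second stays bounded
(`m⁻¹ ≠ 1`), so `|α| C_α → b` and the quotient tends to `m / b = m²(m−1)/(Σ k² p_k − m)`.
The limit is finite and nonzero because `b > 0`: `Σ k² p_k − 2m + 1 = Σ (k−1)² p_k ≥ 0`,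
so `Σ k² p_k − m ≥ m − 1 > 0`.
-/

open Filter Topology

section Moments

variable {p : ℕ → ℝ}

theorem summable_natCast_mul_of_summable_sq_mul (hp : ∀ k, 0 ≤ p k)
    (hp2 : Summable fun k : ℕ => (k : ℝ) ^ 2 * p k) :
    Summable fun k : ℕ => (k : ℝ) * p k :=
  hp2.of_nonneg_of_le (fun k => mul_nonneg k.cast_nonneg (hp k)) fun k =>
    mul_le_mul_of_nonneg_right (by exact_mod_cast Nat.le_self_pow two_ne_zero k) (hp k)

theorem two_mul_tsum_natCast_mul_sub_one_le (hp : ∀ k, 0 ≤ p k) (hpsum : HasSum p 1)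
    (hp2 : Summable fun k : ℕ => (k : ℝ) ^ 2 * p k) :
    2 * ∑' k : ℕ, (k : ℝ) * p k - 1 ≤ ∑' k : ℕ, (k : ℝ) ^ 2 * p k := by
  have hvar := (hp2.hasSum.sub
    ((summable_natCast_mul_of_summable_sq_mul hp hp2).hasSum.mul_left 2)).add hpsum
  have hvar_nonneg := hvar.nonneg fun k => by
    have := mul_nonneg (sq_nonneg ((k : ℝ) - 1)) (hp k)
    linarith
  linarith

end Moments

theorem Real.tendsto_abs_div_one_sub_exp_nhdsLT_zero :
    Tendsto (fun α : ℝ => |α| / (1 - Real.exp α)) (𝓝[<] 0) (𝓝 1) := by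
  have hslope : Tendsto (fun α : ℝ => α⁻¹ * (Real.exp α - 1)) (𝓝[≠] 0) (𝓝 1) := by
    simpa using hasDerivAt_iff_tendsto_slope_zero.mp (Real.hasDerivAt_exp 0)
  refine ((hslope.mono_left (nhdsWithin_mono 0 fun _ h => ne_of_lt h)).inv₀
    one_ne_zero).congr' ?_ |>.trans (by rw [inv_one])
  filter_upwards [self_mem_nhdsWithin] with α (hα : α < 0)
  rw [abs_of_neg hα, mul_inv, inv_inv, neg_div, ← div_neg, neg_sub, div_eq_mul_inv]

theorem Real.tendsto_abs_mul_div_one_sub_exp_add_div (b c r : ℝ) (hr : r ≠ 1) :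
    Tendsto (fun α : ℝ => |α| * (b / (1 - Real.exp α) + c / (1 - Real.exp α * r)))
      (𝓝[<] 0) (𝓝 b) := by
  have hsecond : Tendsto (fun α : ℝ => |α| * (c / (1 - Real.exp α * r))) (𝓝[<] 0) (𝓝 0) := by
    have hcont : ContinuousAt (fun α : ℝ => |α| * (c / (1 - Real.exp α * r))) 0 := by
      refine continuous_abs.continuousAt.mul (continuousAt_const.div (by fun_prop) ?_)
      rw [Real.exp_zero, one_mul, sub_ne_zero]
      exact hr.symm
    simpa using hcont.tendsto.mono_left nhdsWithin_le_nhds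
  have hsum := (Real.tendsto_abs_div_one_sub_exp_nhdsLT_zero.const_mul b).add hsecond
  rw [mul_one, add_zero] at hsum
  refine hsum.congr fun α => ?_
  ring

theorem stmt2_general (p : ℕ → ℝ) (hp : ∀ k, 0 ≤ p k)
    (hpsum : HasSum p 1)
    (hp2 : Summable (fun k : ℕ => (k : ℝ) ^ 2 * p k))
    (m S2 : ℝ) (hm : m = ∑' k : ℕ, (k : ℝ) * p k) (hm1 : 1 < m)
    (hS2 : S2 = ∑' k : ℕ, (k : ℝ) ^ 2 * p k)
    (b : ℝ) (hb : b = (S2 - m) / (m * (m - 1)))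
    (C : ℝ → ℝ)
    (hC : ∀ α < (0 : ℝ), C α = b / (1 - Real.exp α) + (1 - b) / (1 - Real.exp α * m⁻¹)) :
    Tendsto (fun α : ℝ => m * (C α)⁻¹ * Real.exp (-α) / |α|)
      (nhdsWithin 0 (Set.Iio 0)) (nhds (m ^ 2 * (m - 1) / (S2 - m))) := by
  have hSm : 0 < S2 - m := by
    linarith [hm ▸ hS2 ▸ two_mul_tsum_natCast_mul_sub_one_le hp hpsum hp2]
  have hb_pos : 0 < b := hb ▸ div_pos hSm (by nlinarith)
  have hscaled : Tendsto (fun α : ℝ => |α| * C α) (𝓝[<] 0) (𝓝 b) := by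
    refine (Real.tendsto_abs_mul_div_one_sub_exp_add_div b (1 - b) m⁻¹
      (inv_ne_one.mpr hm1.ne')).congr' ?_
    filter_upwards [self_mem_nhdsWithin] with α hα
    rw [hC α hα]
  have hnum : Tendsto (fun α : ℝ => m * Real.exp (-α)) (𝓝[<] 0) (𝓝 m) := by
    have hcont : Continuous fun α : ℝ => m * Real.exp (-α) := by fun_prop
    simpa using (hcont.tendsto 0).mono_left nhdsWithin_le_nhds
  have hlimit : m / b = m ^ 2 * (m - 1) / (S2 - m) := by
    rw [hb]
    field_simp
  refine hlimit ▸ (hnum.div hscaled hb_pos.ne').congr fun α => ?_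
  simp only [Pi.div_apply]
  ring

/-- With `b = (Σ k² p_k − m)/(m(m−1))` and `C_α = b/(1−e^α) + (1−b)/(1−e^α m⁻¹)` for `α < 0`,
one has `lim_{α↗0} (m C_α⁻¹ e^{−α})/|α| = m²(m−1)/(Σ k² p_k − m)`. -/
theorem stmt2 (p : ℕ → ℝ) (hp : ∀ k, 0 ≤ p k) (hp0 : p 0 = 0)
    (hpsum : HasSum p 1)
    (hp2 : Summable (fun k : ℕ => (k : ℝ) ^ 2 * p k))
    (m S2 : ℝ) (hm : m = ∑' k : ℕ, (k : ℝ) * p k) (hm1 : 1 < m)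
    (hS2 : S2 = ∑' k : ℕ, (k : ℝ) ^ 2 * p k)
    (b : ℝ) (hb : b = (S2 - m) / (m * (m - 1)))
    (C : ℝ → ℝ)
    (hC : ∀ α < (0 : ℝ), C α = b / (1 - Real.exp α) + (1 - b) / (1 - Real.exp α * m⁻¹)) :
    Tendsto (fun α : ℝ => m * (C α)⁻¹ * Real.exp (-α) / |α|)
      (nhdsWithin 0 (Set.Iio 0)) (nhds (m ^ 2 * (m - 1) / (S2 - m))) :=
  stmt2_general p hp hpsum hp2 m S2 hm hm1 hS2 b hb C hC
end

section
/- Let Z be a nonnegative square-integrable random variable with E[Z] > 0 and E[Z/(1+Z)] > 0. Writing {X} := X/E[X] for a nonnegative integrable X with positive mean, we have E[{Z/(1+Z)}²] ≤ E[{Z}²]. -/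
open MeasureTheory

/-!
Write `W = Z / (1 + Z) = Z * h` with `h = (1 + Z)⁻¹`; the claim is `E[W²] E[Z]² ≤ E[Z²] E[W]²`.
As functions of `Z`, `h` decreases while `Z` and `W = 1 - h` increase, so Chebyshev's integral
inequality with weight `Z` (integrate `r x r y (f x - f y)(g y - g x) ≥ 0` over the square) gives
`E[W²] E[Z] ≤ E[Z²h] E[W]` and `E[Z²h] E[Z] ≤ E[Z²] E[W]`; chaining the two proves the claim.
-/

theorem Antivary.integral_mul_integral_mul_mul_le {Ω : Type*} [MeasurableSpace Ω]
    {μ : Measure Ω} [SFinite μ] {r f g : Ω → ℝ} (hfg : Antivary f g) (hr₀ : ∀ ω, 0 ≤ r ω)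
    (hr : Integrable r μ) (hrf : Integrable (fun ω => r ω * f ω) μ)
    (hrg : Integrable (fun ω => r ω * g ω) μ)
    (hrfg : Integrable (fun ω => r ω * f ω * g ω) μ) :
    (∫ ω, r ω ∂μ) * ∫ ω, r ω * f ω * g ω ∂μ
      ≤ (∫ ω, r ω * f ω ∂μ) * ∫ ω, r ω * g ω ∂μ := by
  have hpair : 0 ≤ ∫ p : Ω × Ω, r p.1 * r p.2 * -((f p.2 - f p.1) * (g p.2 - g p.1)) ∂μ.prod μ :=
    integral_nonneg fun p => mul_nonneg (mul_nonneg (hr₀ _) (hr₀ _))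
      (neg_nonneg.2 (antivary_iff_forall_smul_nonpos.1 hfg p.1 p.2))
  have hexpand : ∀ p : Ω × Ω, r p.1 * r p.2 * -((f p.2 - f p.1) * (g p.2 - g p.1))
      = (r p.1 * f p.1 * (r p.2 * g p.2) + r p.1 * g p.1 * (r p.2 * f p.2))
        - (r p.1 * f p.1 * g p.1 * r p.2 + r p.1 * (r p.2 * f p.2 * g p.2)) := fun p => by ring
  have hcross : Integrable (fun p : Ω × Ω =>
      r p.1 * f p.1 * (r p.2 * g p.2) + r p.1 * g p.1 * (r p.2 * f p.2)) (μ.prod μ) :=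
    (hrf.mul_prod hrg).add (hrg.mul_prod hrf)
  have hdiag : Integrable (fun p : Ω × Ω =>
      r p.1 * f p.1 * g p.1 * r p.2 + r p.1 * (r p.2 * f p.2 * g p.2)) (μ.prod μ) :=
    (hrfg.mul_prod hr).add (hr.mul_prod hrfg)
  simp only [hexpand] at hpair
  rw [integral_sub hcross hdiag, integral_add (hrf.mul_prod hrg) (hrg.mul_prod hrf),
    integral_add (hrfg.mul_prod hr) (hr.mul_prod hrfg),
    integral_prod_mul (fun ω => r ω * f ω) (fun ω => r ω * g ω),
    integral_prod_mul (fun ω => r ω * g ω) (fun ω => r ω * f ω),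
    integral_prod_mul (fun ω => r ω * f ω * g ω) r,
    integral_prod_mul r (fun ω => r ω * f ω * g ω)] at hpair
  linarith

theorem integral_mul_sq_mul_integral_sq_le_of_antivary {Ω : Type*} [MeasurableSpace Ω]
    {μ : Measure Ω} [IsFiniteMeasure μ] {Z h : Ω → ℝ} {C : ℝ} (hZ₀ : ∀ ω, 0 ≤ Z ω)
    (hZ : MemLp Z 2 μ) (hh : AEStronglyMeasurable h μ) (hh₀ : ∀ ω, 0 ≤ h ω)
    (hhC : ∀ ω, h ω ≤ C) (hZh : Antivary Z h) (hZhh : Antivary (fun ω => Z ω * h ω) h) :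
    (∫ ω, (Z ω * h ω) ^ 2 ∂μ) * (∫ ω, Z ω ∂μ) ^ 2
      ≤ (∫ ω, Z ω ^ 2 ∂μ) * (∫ ω, Z ω * h ω ∂μ) ^ 2 := by
  have hbdd : ∀ᵐ ω ∂μ, ‖h ω‖ ≤ C :=
    ae_of_all _ fun ω => (Real.norm_of_nonneg (hh₀ ω)).trans_le (hhC ω)
  have iZ : Integrable Z μ := hZ.integrable one_le_two
  have iZZ : Integrable (fun ω => Z ω * Z ω) μ := by simpa only [sq] using hZ.integrable_sq
  have iZh : Integrable (fun ω => Z ω * h ω) μ := iZ.mul_bdd hh hbdd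
  have chebW := hZhh.integral_mul_integral_mul_mul_le hZ₀ iZ
    (by simpa only [← mul_assoc] using iZZ.mul_bdd hh hbdd) iZh
    (by simpa only [← mul_assoc] using (iZZ.mul_bdd hh hbdd).mul_bdd hh hbdd)
  have chebZ := hZh.integral_mul_integral_mul_mul_le hZ₀ iZ iZZ iZh (iZZ.mul_bdd hh hbdd)
  have hw : ∫ ω, Z ω * (Z ω * h ω) * h ω ∂μ = ∫ ω, (Z ω * h ω) ^ 2 ∂μ :=
    integral_congr_ae (ae_of_all _ fun ω => by ring)
  have hzzh : ∫ ω, Z ω * (Z ω * h ω) ∂μ = ∫ ω, Z ω * Z ω * h ω ∂μ :=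
    integral_congr_ae (ae_of_all _ fun ω => by ring)
  have hzz : ∫ ω, Z ω * Z ω ∂μ = ∫ ω, Z ω ^ 2 ∂μ :=
    integral_congr_ae (ae_of_all _ fun ω => by ring)
  rw [hw, hzzh] at chebW
  rw [hzz] at chebZ
  have hEZ : 0 ≤ ∫ ω, Z ω ∂μ := integral_nonneg hZ₀
  have hEZh : 0 ≤ ∫ ω, Z ω * h ω ∂μ := integral_nonneg fun ω => mul_nonneg (hZ₀ ω) (hh₀ ω)
  linarith [mul_le_mul_of_nonneg_left chebW hEZ, mul_le_mul_of_nonneg_right chebZ hEZh]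

theorem integral_div_const_sq {Ω : Type*} [MeasurableSpace Ω] (μ : Measure Ω) (X : Ω → ℝ)
    (c : ℝ) : ∫ ω, (X ω / c) ^ 2 ∂μ = (∫ ω, X ω ^ 2 ∂μ) / c ^ 2 := by
  simp only [div_pow, integral_div]

theorem stmt3_general {Ω : Type*} [MeasurableSpace Ω] (μ : Measure Ω) [IsProbabilityMeasure μ]
    (Z : Ω → ℝ) (hZnn : ∀ ω, 0 ≤ Z ω)
    (hZ2 : MemLp Z 2 μ)
    (hEZ : 0 < ∫ ω, Z ω ∂μ)
    (hEW : 0 < ∫ ω, Z ω / (1 + Z ω) ∂μ) :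
    ∫ ω, (Z ω / (1 + Z ω) / (∫ ω', Z ω' / (1 + Z ω') ∂μ)) ^ 2 ∂μ
      ≤ ∫ ω, (Z ω / (∫ ω', Z ω' ∂μ)) ^ 2 ∂μ := by
  have hpos : ∀ ω, 0 < 1 + Z ω := fun ω => by linarith [hZnn ω]
  have hlt : ∀ i j, (1 + Z i)⁻¹ < (1 + Z j)⁻¹ → Z j < Z i := fun i j hij => by
    simpa using (inv_lt_inv₀ (hpos i) (hpos j)).1 hij
  have hW : ∀ ω, Z ω * (1 + Z ω)⁻¹ = 1 - (1 + Z ω)⁻¹ := fun ω => by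
    field_simp [(hpos ω).ne']
    ring
  have key := integral_mul_sq_mul_integral_sq_le_of_antivary (h := fun ω => (1 + Z ω)⁻¹) hZnn hZ2
    (hZ2.1.aemeasurable.const_add 1).inv.aestronglyMeasurable
    (fun ω => (inv_pos.2 (hpos ω)).le) (fun ω => inv_le_one_of_one_le₀ (by linarith [hZnn ω]))
    (fun i j hij => (hlt i j hij).le) (fun i j hij => by simp only [hW]; linarith)
  simp only [← div_eq_mul_inv] at key
  rw [integral_div_const_sq μ (fun ω => Z ω / (1 + Z ω)), integral_div_const_sq μ Z,
    div_le_div_iff₀ (by positivity) (by positivity)]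
  exact key

/-- Normalized second-moment inequality: for nonnegative square-integrable `Z`,
`E[{Z/(1+Z)}²] ≤ E[{Z}²]` where `{X} = X / E[X]`. -/
theorem stmt3 {Ω : Type*} [MeasurableSpace Ω] (μ : Measure Ω) [IsProbabilityMeasure μ]
    (Z : Ω → ℝ) (hZnn : ∀ ω, 0 ≤ Z ω) (hZmeas : Measurable Z)
    (hZ2 : MemLp Z 2 μ)
    (hEZ : 0 < ∫ ω, Z ω ∂μ)
    (hEW : 0 < ∫ ω, Z ω / (1 + Z ω) ∂μ) :
    ∫ ω, (Z ω / (1 + Z ω) / (∫ ω', Z ω' / (1 + Z ω') ∂μ)) ^ 2 ∂μ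
      ≤ ∫ ω, (Z ω / (∫ ω', Z ω' ∂μ)) ^ 2 ∂μ :=
  stmt3_general μ Z hZnn hZ2 hEZ hEW
end

section
/- Let B be a nonnegative square-integrable random variable with E[B] > 0 satisfying E[B] = e^α E[B/(1+B)] for some α > 0, and suppose E[B²] ≤ K (E[B])² for a constant K > 0. Then E[B] ≥ (1 − e^{−α})/K and E[B] ≤ e^α − 1. -/
/-!
Write `m = E[B]`. Since `b/(1+b) = b - b²/(1+b)`, the fixed-point equation says
`E[B²/(1+B)] = (1 - e^{-α}) m`, and `E[B²/(1+B)] ≤ E[B²] ≤ K m²` gives the lower bound.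
For the upper bound, Jensen's inequality for the concave map `b ↦ b/(1+b)` turns the
fixed-point equation into `m ≤ e^α m/(1+m)`, i.e. `1 + m ≤ e^α`.
-/

open MeasureTheory Set

-- `x / (1 + x) = 1 - (1 + x)⁻¹`, and `x ↦ x⁻¹` is convex on `(0, ∞)`.
theorem concaveOn_div_one_add : ConcaveOn ℝ (Ici 0) fun x : ℝ => x / (1 + x) := by
  have h := (((convexOn_zpow (𝕜 := ℝ) (-1)).translate_right 1).neg.add_const 1).subset
    (s := Ici 0) (fun x (hx : (0 : ℝ) ≤ x) => show (0 : ℝ) < 1 + x by linarith) (convex_Ici 0)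
  refine h.congr fun x (hx : (0 : ℝ) ≤ x) => ?_
  simp only [Pi.add_apply, Pi.neg_apply, Function.comp_apply, zpow_neg_one]
  field_simp
  ring

section

variable {Ω : Type*} [MeasurableSpace Ω] {μ : Measure Ω} {B : Ω → ℝ}

theorem integrable_div_one_add (hB : Integrable B μ) (hBnn : 0 ≤ᵐ[μ] B) :
    Integrable (fun ω => B ω / (1 + B ω)) μ := by
  have hmeas : AEStronglyMeasurable (fun ω => B ω / (1 + B ω)) μ :=
    (hB.aemeasurable.div (aemeasurable_const.add hB.aemeasurable)).aestronglyMeasurable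
  refine hB.mono hmeas ?_
  filter_upwards [hBnn] with ω (hω : 0 ≤ B ω)
  rw [Real.norm_of_nonneg (by positivity), Real.norm_of_nonneg hω]
  exact div_le_self hω (by linarith)

theorem sq_div_one_add_ae_eq (hBnn : 0 ≤ᵐ[μ] B) :
    (fun ω => B ω ^ 2 / (1 + B ω)) =ᵐ[μ] fun ω => B ω - B ω / (1 + B ω) := by
  filter_upwards [hBnn] with ω (hω : 0 ≤ B ω)
  have : 1 + B ω ≠ 0 := by positivity
  field_simp
  ring

theorem integrable_sq_div_one_add (hB : Integrable B μ) (hBnn : 0 ≤ᵐ[μ] B) :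
    Integrable (fun ω => B ω ^ 2 / (1 + B ω)) μ :=
  (hB.sub (integrable_div_one_add hB hBnn)).congr (sq_div_one_add_ae_eq hBnn).symm

theorem integral_sq_div_one_add (hB : Integrable B μ) (hBnn : 0 ≤ᵐ[μ] B) :
    ∫ ω, B ω ^ 2 / (1 + B ω) ∂μ = ∫ ω, B ω ∂μ - ∫ ω, B ω / (1 + B ω) ∂μ := by
  rw [integral_congr_ae (sq_div_one_add_ae_eq hBnn),
    integral_sub hB (integrable_div_one_add hB hBnn)]

theorem integral_sq_div_one_add_of_fixed {α : ℝ} (hB : Integrable B μ) (hBnn : 0 ≤ᵐ[μ] B)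
    (hfix : ∫ ω, B ω ∂μ = Real.exp α * ∫ ω, B ω / (1 + B ω) ∂μ) :
    ∫ ω, B ω ^ 2 / (1 + B ω) ∂μ = (1 - Real.exp (-α)) * ∫ ω, B ω ∂μ := by
  have hquot : ∫ ω, B ω / (1 + B ω) ∂μ = Real.exp (-α) * ∫ ω, B ω ∂μ := by
    rw [hfix, ← mul_assoc, ← Real.exp_add, neg_add_cancel, Real.exp_zero, one_mul]
  rw [integral_sq_div_one_add hB hBnn, hquot]
  ring

theorem one_sub_exp_neg_mul_integral_le_integral_sq {α : ℝ} (hB : Integrable B μ)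
    (hB2 : Integrable (fun ω => B ω ^ 2) μ) (hBnn : 0 ≤ᵐ[μ] B)
    (hfix : ∫ ω, B ω ∂μ = Real.exp α * ∫ ω, B ω / (1 + B ω) ∂μ) :
    (1 - Real.exp (-α)) * ∫ ω, B ω ∂μ ≤ ∫ ω, B ω ^ 2 ∂μ := by
  rw [← integral_sq_div_one_add_of_fixed hB hBnn hfix]
  refine integral_mono_ae (integrable_sq_div_one_add hB hBnn) hB2 ?_
  filter_upwards [hBnn] with ω (hω : 0 ≤ B ω)
  exact div_le_self (sq_nonneg _) (by linarith)

theorem integral_div_one_add_le [IsProbabilityMeasure μ] (hB : Integrable B μ)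
    (hBnn : 0 ≤ᵐ[μ] B) :
    ∫ ω, B ω / (1 + B ω) ∂μ ≤ (∫ ω, B ω ∂μ) / (1 + ∫ ω, B ω ∂μ) :=
  concaveOn_div_one_add.le_map_integral
    (continuousOn_id.div (continuousOn_const.add continuousOn_id)
      fun x (hx : (0 : ℝ) ≤ x) => by positivity)
    isClosed_Ici hBnn hB (integrable_div_one_add hB hBnn)

theorem integral_le_exp_sub_one_of_fixed [IsProbabilityMeasure μ] {α : ℝ} (hB : Integrable B μ)
    (hBnn : 0 ≤ᵐ[μ] B) (hpos : 0 < ∫ ω, B ω ∂μ)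
    (hfix : ∫ ω, B ω ∂μ = Real.exp α * ∫ ω, B ω / (1 + B ω) ∂μ) :
    ∫ ω, B ω ∂μ ≤ Real.exp α - 1 := by
  set m := ∫ ω, B ω ∂μ
  have h : m ≤ Real.exp α * (m / (1 + m)) :=
    hfix.trans_le (mul_le_mul_of_nonneg_left (integral_div_one_add_le hB hBnn) (Real.exp_pos α).le)
  rw [← mul_div_assoc, le_div_iff₀ (by positivity)] at h
  nlinarith

end

theorem stmt4_general {Ω : Type*} [MeasurableSpace Ω] (μ : Measure Ω) [IsProbabilityMeasure μ]
    (B : Ω → ℝ) (hBnn : ∀ ω, 0 ≤ B ω)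
    (hB2 : MemLp B 2 μ)
    (α K : ℝ) (hK : 0 < K)
    (hEB : 0 < ∫ ω, B ω ∂μ)
    (hfix : ∫ ω, B ω ∂μ = Real.exp α * ∫ ω, B ω / (1 + B ω) ∂μ)
    (hK2 : ∫ ω, (B ω) ^ 2 ∂μ ≤ K * (∫ ω, B ω ∂μ) ^ 2) :
    (1 - Real.exp (-α)) / K ≤ ∫ ω, B ω ∂μ ∧ ∫ ω, B ω ∂μ ≤ Real.exp α - 1 := by
  have hBnn' : 0 ≤ᵐ[μ] B := .of_forall hBnn
  have hB := hB2.integrable one_le_two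
  refine ⟨?_, integral_le_exp_sub_one_of_fixed hB hBnn' hEB hfix⟩
  have h := one_sub_exp_neg_mul_integral_le_integral_sq hB hB2.integrable_sq hBnn' hfix
  rw [div_le_iff₀ hK]
  nlinarith

/-- A priori bounds on `E[B]` for the escape-probability fixed point:
if `E[B] = e^α E[B/(1+B)]` and `E[B²] ≤ K (E[B])²`, then
`E[B] ≥ (1 − e^{−α})/K` and `E[B] ≤ e^α − 1`. -/
theorem stmt4 {Ω : Type*} [MeasurableSpace Ω] (μ : Measure Ω) [IsProbabilityMeasure μ]
    (B : Ω → ℝ) (hBnn : ∀ ω, 0 ≤ B ω) (hBmeas : Measurable B)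
    (hB2 : MemLp B 2 μ)
    (α K : ℝ) (hα : 0 < α) (hK : 0 < K)
    (hEB : 0 < ∫ ω, B ω ∂μ)
    (hfix : ∫ ω, B ω ∂μ = Real.exp α * ∫ ω, B ω / (1 + B ω) ∂μ)
    (hK2 : ∫ ω, (B ω) ^ 2 ∂μ ≤ K * (∫ ω, B ω ∂μ) ^ 2) :
    (1 - Real.exp (-α)) / K ≤ ∫ ω, B ω ∂μ ∧ ∫ ω, B ω ∂μ ≤ Real.exp α - 1 :=
  stmt4_general μ B hBnn hB2 α K hK hEB hfix hK2
end

section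
/- With the notation of the IGW environment process, let ψ_α(T) = C_α⁻¹ Σ_{j=0}^∞ e^{jα} W_{-j}(T) for α < 0, and let D f(T) = f(τ⁻¹T) − f(T) be the shift toward the ancestor. Then D ψ_α = (e^{−α} − 1) ψ_α − C_α⁻¹ e^{−α} W_o. -/
theorem tsum_pow_mul_succ {𝕜 : Type*} [DivisionRing 𝕜] [TopologicalSpace 𝕜] [IsTopologicalRing 𝕜]
    [T2Space 𝕜] {q : 𝕜} (hq : q ≠ 0) {a : ℕ → 𝕜} (h : Summable fun j => q ^ j * a j) :
    ∑' j, q ^ j * a (j + 1) = q⁻¹ * (∑' j, q ^ j * a j - a 0) := by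
  have hsplit : ∑' j, q ^ j * a j = a 0 + q * ∑' j, q ^ j * a (j + 1) := by
    simp only [h.tsum_eq_zero_add, pow_zero, one_mul, pow_succ', mul_assoc, tsum_mul_left]
  rw [hsplit, add_sub_cancel_left, inv_mul_cancel_left₀ hq]

theorem stmt9_general {T : Type*} (α Cα : ℝ)
    (τinv : T → T) (W : ℕ → T → ℝ)
    (hshift : ∀ j t, W j (τinv t) = W (j + 1) t)
    (hsum : ∀ t, Summable (fun j : ℕ => Real.exp (j * α) * W j t))
    (ψ : T → ℝ)
    (hψ : ∀ t, ψ t = Cα⁻¹ * ∑' j : ℕ, Real.exp (j * α) * W j t) :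
    ∀ t, ψ (τinv t) - ψ t
      = (Real.exp (-α) - 1) * ψ t - Cα⁻¹ * Real.exp (-α) * W 0 t := by
  intro t
  simp only [hψ, hshift, Real.exp_nat_mul, Real.exp_neg] at hsum ⊢
  rw [tsum_pow_mul_succ (Real.exp_pos α).ne' (hsum t)]
  ring

/-- Key identity for the stationary density of the environment process:
with `ψ_α(T) = C_α⁻¹ Σ_{j≥0} e^{jα} W_{-j}(T)` and `D f(T) = f(τ⁻¹T) − f(T)`,
one has `D ψ_α = (e^{−α} − 1) ψ_α − C_α⁻¹ e^{−α} W_o`. -/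
theorem stmt9 {T : Type*} (α Cα : ℝ) (hα : α < 0) (hC : Cα ≠ 0)
    (τinv : T → T) (W : ℕ → T → ℝ)
    (hshift : ∀ j t, W j (τinv t) = W (j + 1) t)
    (hsum : ∀ t, Summable (fun j : ℕ => Real.exp (j * α) * W j t))
    (ψ : T → ℝ)
    (hψ : ∀ t, ψ t = Cα⁻¹ * ∑' j : ℕ, Real.exp (j * α) * W j t) :
    ∀ t, ψ (τinv t) - ψ t
      = (Real.exp (-α) - 1) * ψ t - Cα⁻¹ * Real.exp (-α) * W 0 t :=
  stmt9_general α Cα τinv W hshift hsum ψ hψ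
end

section
/- Let n ≥ 2 and let b_{j+1} > 0, a_j ≥ 0 for 0 ≤ j < n. Define z_n = 0 and z_j = 1/(1 + a_j + b_{j+1}(1 − z_{j+1})) for 0 ≤ j ≤ n−1. Let (S_k) be the Markov chain on {0,…,n} with transition probabilities P(S_k = j+1 | S_{k−1} = j) = b_{j+1}/(1+b_{j+1}) and P(S_k = j−1 | S_{k−1} = j) = 1/(1+b_{j+1}), started at S_0 = r with 1 ≤ r < n. Then ∏_{j=1}^r z_j = E_r[ 1{τ_S(0) < τ_S(n)} ∏_{j=1}^{n−1} ((1+b_{j+1})/(1+b_{j+1}+a_j))^{L^j_{τ_S(0)}} ], where τ_S(x) = inf{k ≥ 1 : S_k = x} and L^j_k = Σ_{i=0}^{k−1} 1{S_i = j} is the local time at j before time k. -/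
/-!
Both sides, as functions of the starting point `r`, solve the Dirichlet problem
`(1 + a r + b (r + 1)) f r = b (r + 1) f (r + 1) + f (r - 1)` for `0 < r < n`, with
`f 0 = 1` and `f n = 0`. For `∏_{j=1}^r z j` this is the Riccati recursion for `z`; for the
expectation it is the first-step decomposition of the walk, once each step from `x` is weighted
by the transition probability times the local-time factor at `x`. The path series converges
because this kernel is substochastic. The solution is unique: a solution vanishing at `0` and
`n` with `f 1 ≥ 0` is nondecreasing on `[0, n]`, hence zero.
-/

open Finset

lemma prod_pow_card_filter_eq_prod {ι κ M : Type*} [Fintype ι] [DecidableEq κ] [CommMonoid M]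
    {s : Finset κ} {g : ι → κ} (hg : ∀ i, g i ∈ s) (f : κ → M) :
    ∏ j ∈ s, f j ^ #{i | g i = j} = ∏ i, f (g i) := by
  rw [← prod_fiberwise_of_maps_to (fun i _ => hg i)]
  refine prod_congr rfl fun j _ => ?_
  rw [prod_congr rfl fun i hi => by rw [(mem_filter.1 hi).2], prod_const]

lemma Fin.forall_castSucc_iff {α : Type*} {k : ℕ} (P : α → Prop) (p : Fin (k + 1) → α)
    (h0 : P (p 0)) :
    (∀ i : Fin k, P (p i.castSucc)) ↔
      ∀ i : Fin (k + 1), 0 < (i : ℕ) → (i : ℕ) < k → P (p i) := by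
  refine ⟨fun h i _ hik => h ⟨i, hik⟩, fun h i => ?_⟩
  rcases Nat.eq_zero_or_pos i with hi | hi
  · rwa [show i.castSucc = 0 from Fin.ext hi]
  · exact h i.castSucc hi i.is_lt

namespace SpineWalk

section PathSum

variable (W : ℕ → ℕ → ℝ) (I : ℕ → Prop) [DecidablePred I] (n : ℕ)

def pathSum (k x y : ℕ) : ℝ :=
  ∑ p : Fin (k + 1) → Fin (n + 1),
    if (p 0 : ℕ) = x ∧ (p (Fin.last k) : ℕ) = y ∧ ∀ i : Fin k, I (p i.castSucc) then
      ∏ i : Fin k, W (p i.castSucc) (p i.succ)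
    else 0

noncomputable def hitSum (x y : ℕ) : ℝ := ∑' k, pathSum W I n k x y

variable {W I n}

lemma pathSum_zero {x : ℕ} (hx : x ≤ n) (y : ℕ) :
    pathSum W I n 0 x y = if x = y then 1 else 0 := by
  rw [pathSum, ← (Equiv.funUnique (Fin 1) (Fin (n + 1))).symm.sum_comp,
    Fintype.sum_eq_single ⟨x, Nat.lt_succ_of_le hx⟩ fun v hv => by simp [Fin.val_ne_of_ne hv]]
  simp

lemma pathSum_succ (k : ℕ) {x : ℕ} (hx : x ≤ n) (y : ℕ) :
    pathSum W I n (k + 1) x y =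
      if I x then ∑ v ∈ range (n + 1), W x v * pathSum W I n k v y else 0 := by
  rw [pathSum, ← (Fin.consEquiv fun _ => Fin (n + 1)).sum_comp, Fintype.sum_prod_type,
    Fintype.sum_eq_single ⟨x, Nat.lt_succ_of_le hx⟩ fun v hv => by simp [Fin.val_ne_of_ne hv]]
  simp only [Fin.consEquiv_apply, Fin.cons_zero, ← Fin.succ_last, Fin.cons_succ,
    Fin.forall_fin_succ, Fin.castSucc_zero, Fin.prod_univ_succ, ← Fin.succ_castSucc]
  rw [← Fin.sum_univ_eq_sum_range (fun v => W x v * pathSum W I n k v y)]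
  simp only [pathSum]
  split_ifs with hIx
  · simp only [mul_sum, true_and, hIx]
    rw [sum_comm]
    refine sum_congr rfl fun q _ => ?_
    rw [Fintype.sum_eq_single (q 0) fun v hv => by simp [Fin.val_eq_val, Ne.symm hv]]
    simp [mul_ite]
  · simp [hIx]

lemma hitSum_eq_ite {x : ℕ} (hx : x ≤ n) (hIx : ¬ I x) (y : ℕ) :
    hitSum W I n x y = if x = y then 1 else 0 := by
  rw [hitSum, tsum_eq_single 0, pathSum_zero hx]
  rintro (_ | k) hk
  · exact absurd rfl hk
  · rw [pathSum_succ _ hx, if_neg hIx]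

variable (hW : ∀ x ≤ n, I x → ∀ v, 0 ≤ W x v)
include hW

lemma pathSum_nonneg (k x y : ℕ) : 0 ≤ pathSum W I n k x y :=
  sum_nonneg fun p _ => by
    split_ifs with hp
    · exact prod_nonneg fun i _ => hW _ (Nat.lt_succ_iff.1 (p _).is_lt) (hp.2.2 i) _
    · exact le_rfl

variable (hrow : ∀ x ≤ n, I x → ∑ v ∈ range (n + 1), W x v ≤ 1) {y : ℕ} (hy : ¬ I y)
include hrow hy

lemma sum_range_pathSum_le_one (K : ℕ) :
    ∀ x ≤ n, ∑ k ∈ range K, pathSum W I n k x y ≤ 1 := by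
  induction K with
  | zero => simp
  | succ K ih =>
    intro x hx
    rw [sum_range_succ', pathSum_zero hx]
    simp only [pathSum_succ _ hx]
    by_cases hIx : I x
    · have hxy : x ≠ y := by rintro rfl; exact hy hIx
      simp only [hIx, if_true, if_neg hxy, add_zero]
      rw [sum_comm]
      calc ∑ v ∈ range (n + 1), ∑ k ∈ range K, W x v * pathSum W I n k v y
          = ∑ v ∈ range (n + 1), W x v * ∑ k ∈ range K, pathSum W I n k v y := by
            simp only [mul_sum]
        _ ≤ ∑ v ∈ range (n + 1), W x v * 1 := by
            gcongr with v hv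
            · exact hW x hx hIx v
            · exact ih v (by simpa [Nat.lt_succ_iff] using hv)
        _ ≤ 1 := by simpa using hrow x hx hIx
    · simp only [hIx, if_false, sum_const_zero, zero_add]
      split_ifs <;> norm_num

lemma summable_pathSum {x : ℕ} (hx : x ≤ n) : Summable fun k => pathSum W I n k x y :=
  summable_of_sum_range_le (fun k => pathSum_nonneg hW k x y)
    fun K => sum_range_pathSum_le_one hW hrow hy K x hx

lemma hitSum_eq_sum {x : ℕ} (hx : x ≤ n) (hIx : I x) :
    hitSum W I n x y = ∑ v ∈ range (n + 1), W x v * hitSum W I n v y := by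
  have hxy : x ≠ y := by rintro rfl; exact hy hIx
  rw [hitSum, (summable_pathSum hW hrow hy hx).tsum_eq_zero_add, pathSum_zero hx, if_neg hxy,
    zero_add]
  simp only [pathSum_succ _ hx, if_pos hIx]
  rw [Summable.tsum_finsetSum fun v hv => ((summable_pathSum hW hrow hy
    (by simpa [Nat.lt_succ_iff] using hv)).mul_left (W x v))]
  simp only [tsum_mul_left, hitSum]

end PathSum

section BirthDeath

variable (a b : ℕ → ℝ)

noncomputable def stepProb (x y : ℕ) : ℝ :=
  if y = x + 1 then b (x + 1) / (1 + b (x + 1))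
  else if y + 1 = x then 1 / (1 + b (x + 1)) else 0

noncomputable def killFactor (j : ℕ) : ℝ := (1 + b (j + 1)) / (1 + b (j + 1) + a j)

noncomputable def spineKernel (x y : ℕ) : ℝ := stepProb b x y * killFactor a b x

abbrev Interior (n x : ℕ) : Prop := x ≠ 0 ∧ x ≠ n

def IsHarmonic (n : ℕ) (f : ℕ → ℝ) : Prop :=
  ∀ r, 1 ≤ r → r < n → (1 + a r + b (r + 1)) * f r = b (r + 1) * f (r + 1) + f (r - 1)

variable {a b}

lemma sum_range_stepProb_mul {n x : ℕ} (hx : 1 ≤ x) (hxn : x < n) (g : ℕ → ℝ) :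
    ∑ v ∈ range (n + 1), stepProb b x v * g v =
      b (x + 1) / (1 + b (x + 1)) * g (x + 1) + 1 / (1 + b (x + 1)) * g (x - 1) := by
  rw [sum_eq_add_of_mem (x + 1) (x - 1) (by simp; omega) (by simp; omega) (by omega)]
  · rw [stepProb, stepProb, if_pos rfl, if_neg (show x - 1 ≠ x + 1 by omega),
      if_pos (show x - 1 + 1 = x by omega)]
  · intro v _ hv
    simp only [stepProb, if_neg hv.1, if_neg (show v + 1 ≠ x by omega), zero_mul]

variable {n : ℕ}

lemma IsHarmonic.sub {f g : ℕ → ℝ} (hf : IsHarmonic a b n f) (hg : IsHarmonic a b n g) :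
    IsHarmonic a b n (f - g) := fun r hr hrn => by
  simp only [Pi.sub_apply]
  linear_combination hf r hr hrn - hg r hr hrn

lemma IsHarmonic.neg {f : ℕ → ℝ} (hf : IsHarmonic a b n f) : IsHarmonic a b n (-f) :=
  fun r hr hrn => by
  simp only [Pi.neg_apply]
  linear_combination -hf r hr hrn

lemma sum_range_spineKernel_mul {x : ℕ} (hx : 1 ≤ x) (hxn : x < n) (g : ℕ → ℝ) :
    ∑ v ∈ range (n + 1), spineKernel a b x v * g v =
      killFactor a b x *
        (b (x + 1) / (1 + b (x + 1)) * g (x + 1) + 1 / (1 + b (x + 1)) * g (x - 1)) := by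
  rw [← sum_range_stepProb_mul hx hxn, mul_sum]
  exact sum_congr rfl fun v _ => by rw [spineKernel]; ring

variable (ha : ∀ j < n, 0 ≤ a j) (hb : ∀ j < n, 0 < b (j + 1))
include ha hb

lemma IsHarmonic.monotoneOn {f : ℕ → ℝ} (hf : IsHarmonic a b n f) (h0 : f 0 = 0)
    (h1 : 0 ≤ f 1) : MonotoneOn f (Set.Iic n) := by
  have step : ∀ r < n, 0 ≤ f r ∧ f r ≤ f (r + 1) := by
    intro r
    induction r with
    | zero => intro _; exact ⟨h0.ge, by simpa [h0] using h1⟩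
    | succ r ih =>
      intro hrn
      obtain ⟨hr0, hr1⟩ := ih (by omega)
      have hrec := hf (r + 1) (by omega) hrn
      rw [Nat.add_sub_cancel] at hrec
      have hgain : b (r + 2) * f (r + 1) ≤ b (r + 2) * f (r + 2) := by
        nlinarith [mul_nonneg (ha (r + 1) hrn) (hr0.trans hr1)]
      exact ⟨hr0.trans hr1, le_of_mul_le_mul_left hgain (hb (r + 1) hrn)⟩
  refine monotoneOn_of_le_succ Set.ordConnected_Iic fun r _ _ hr => ?_
  rw [Set.mem_Iic, Order.succ_eq_add_one] at hr
  simpa only [Order.succ_eq_add_one] using (step r hr).2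

lemma IsHarmonic.eq_zero {f : ℕ → ℝ} (hf : IsHarmonic a b n f) (h0 : f 0 = 0) (hn : f n = 0) :
    ∀ r ≤ n, f r = 0 := by
  wlog h1 : 0 ≤ f 1 generalizing f
  · intro r hr
    simpa using this hf.neg (by simp [h0]) (by simp [hn]) (by simp; linarith) r hr
  intro r hr
  have hmono := hf.monotoneOn ha hb h0 h1
  have hle := hmono (Set.mem_Iic.2 (Nat.zero_le n)) hr (Nat.zero_le r)
  have hge := hmono hr (Set.mem_Iic.2 le_rfl) hr
  linarith

lemma IsHarmonic.eq {f g : ℕ → ℝ} (hf : IsHarmonic a b n f) (hg : IsHarmonic a b n g)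
    (h0 : f 0 = g 0) (hn : f n = g n) {r : ℕ} (hr : r ≤ n) : f r = g r :=
  sub_eq_zero.1 ((hf.sub hg).eq_zero ha hb (sub_eq_zero.2 h0) (sub_eq_zero.2 hn) r hr)

lemma spineKernel_nonneg {x : ℕ} (hxn : x < n) (v : ℕ) : 0 ≤ spineKernel a b x v := by
  have := hb x hxn
  have := ha x hxn
  unfold spineKernel stepProb killFactor
  split_ifs <;> positivity

lemma sum_range_spineKernel_le_one {x : ℕ} (hx : 1 ≤ x) (hxn : x < n) :
    ∑ v ∈ range (n + 1), spineKernel a b x v ≤ 1 := by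
  have hb1 := hb x hxn
  have ha1 := ha x hxn
  have hsum := sum_range_spineKernel_mul (a := a) (b := b) hx hxn fun _ => 1
  simp only [mul_one] at hsum
  rw [hsum, killFactor, ← add_div, add_comm (b (x + 1)) 1, div_self (by positivity),
    mul_one, div_le_one (by positivity)]
  linarith

lemma isHarmonic_hitSum :
    IsHarmonic a b n fun x => hitSum (spineKernel a b) (Interior n) n x 0 := by
  have hW : ∀ x ≤ n, Interior n x → ∀ v, 0 ≤ spineKernel a b x v :=
    fun x hx hIx => spineKernel_nonneg ha hb (lt_of_le_of_ne hx hIx.2)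
  have hrow : ∀ x ≤ n, Interior n x → ∑ v ∈ range (n + 1), spineKernel a b x v ≤ 1 :=
    fun x hx hIx => sum_range_spineKernel_le_one ha hb (Nat.one_le_iff_ne_zero.2 hIx.1)
      (lt_of_le_of_ne hx hIx.2)
  intro r hr hrn
  have hb1 := hb r hrn
  have ha1 := ha r hrn
  dsimp only
  rw [hitSum_eq_sum hW hrow (by simp) hrn.le ⟨by omega, by omega⟩,
    sum_range_spineKernel_mul hr hrn, killFactor]
  field_simp
  ring

section Riccati

variable {z : ℕ → ℝ} (hzn : z n = 0)
  (hz : ∀ j < n, z j = 1 / (1 + a j + b (j + 1) * (1 - z (j + 1))))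
include hzn hz

lemma riccati_mem_Icc {j : ℕ} (hj : j ≤ n) : 0 ≤ z j ∧ z j ≤ 1 := by
  refine Nat.decreasingInduction (motive := fun j _ => 0 ≤ z j ∧ z j ≤ 1)
    (fun j hjn ih => ?_) (by simp [hzn]) hj
  have hden : 1 ≤ 1 + a j + b (j + 1) * (1 - z (j + 1)) := by
    nlinarith [ha j hjn, hb j hjn]
  rw [hz j hjn]
  exact ⟨by positivity, by rw [div_le_one (by positivity)]; exact hden⟩

lemma isHarmonic_prod_riccati : IsHarmonic a b n fun r => ∏ j ∈ Icc 1 r, z j := by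
  intro r hr hrn
  have hden : 1 ≤ 1 + a r + b (r + 1) * (1 - z (r + 1)) := by
    nlinarith [ha r hrn, hb r hrn, riccati_mem_Icc ha hb hzn hz (j := r + 1) hrn]
  have hinv : z r * (1 + a r + b (r + 1) * (1 - z (r + 1))) = 1 := by
    rw [hz r hrn]
    field_simp
  obtain ⟨s, rfl⟩ : ∃ s, r = s + 1 := ⟨r - 1, by omega⟩
  dsimp only
  rw [prod_Icc_succ_top (b := s + 1) (by omega), prod_Icc_succ_top (b := s) (by omega),
    Nat.add_sub_cancel]
  linear_combination (∏ j ∈ Icc 1 s, z j) * hinv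

end Riccati

end BirthDeath

section PathWeight

variable {a b : ℕ → ℝ} {n : ℕ}

lemma prod_stepProb_mul_prod_killFactor_pow {k : ℕ} (p : Fin (k + 1) → Fin (n + 1))
    (hp : ∀ i : Fin k, Interior n (p i.castSucc)) :
    (∏ i : Fin k, stepProb b (p i.castSucc) (p i.succ)) *
        ∏ j ∈ Icc 1 (n - 1), killFactor a b j ^ #{i : Fin k | (p i.castSucc : ℕ) = j} =
      ∏ i : Fin k, spineKernel a b (p i.castSucc) (p i.succ) := by
  rw [prod_pow_card_filter_eq_prod (g := fun i : Fin k => (p i.castSucc : ℕ)),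
    ← prod_mul_distrib]
  · rfl
  · intro i
    have := (p i.castSucc).is_lt
    have := hp i
    simp only [mem_Icc]
    omega

lemma ite_pathSum_eq {k r : ℕ} (hr : Interior n r) (p : Fin (k + 1) → Fin (n + 1)) :
    (if (p 0 : ℕ) = r ∧ (p (Fin.last k) : ℕ) = 0 ∧
          ∀ i : Fin k, Interior n (p i.castSucc) then
        ∏ i : Fin k, spineKernel a b (p i.castSucc) (p i.succ)
      else 0) =
    if (p 0 : ℕ) = r ∧ (p (Fin.last k) : ℕ) = 0 ∧
        ∀ i : Fin (k + 1), 0 < (i : ℕ) → (i : ℕ) < k →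
          (p i : ℕ) ≠ 0 ∧ (p i : ℕ) ≠ n then
      (∏ i : Fin k, stepProb b (p i.castSucc) (p i.succ)) *
        ∏ j ∈ Icc 1 (n - 1), killFactor a b j ^ #{i : Fin k | (p i.castSucc : ℕ) = j}
    else 0 := by
  have hiff (h0 : (p 0 : ℕ) = r) :=
    Fin.forall_castSucc_iff (fun v : Fin (n + 1) => Interior n v) p (h0 ▸ hr)
  split_ifs with h h' h'
  · exact (prod_stepProb_mul_prod_killFactor_pow p h.2.2).symm
  · exact absurd ⟨h.1, h.2.1, (hiff h.1).1 h.2.2⟩ h'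
  · exact absurd ⟨h'.1, h'.2.1, (hiff h'.1).2 h'.2.2⟩ h
  · rfl

end PathWeight

end SpineWalk

open SpineWalk in
theorem stmt10_general (n r : ℕ) (hr : 1 ≤ r) (hrn : r < n)
    (a b : ℕ → ℝ) (ha : ∀ j < n, 0 ≤ a j) (hb : ∀ j < n, 0 < b (j + 1))
    (z : ℕ → ℝ) (hzn : z n = 0)
    (hz : ∀ j < n, z j = 1 / (1 + a j + b (j + 1) * (1 - z (j + 1)))) :
    ∏ j ∈ Finset.Icc 1 r, z j =
      ∑' k : ℕ, ∑ p : Fin (k + 1) → Fin (n + 1),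
        (if (p 0 : ℕ) = r ∧ (p (Fin.last k) : ℕ) = 0 ∧
            (∀ i : Fin (k + 1), 0 < (i : ℕ) → (i : ℕ) < k →
              (p i : ℕ) ≠ 0 ∧ (p i : ℕ) ≠ n) then
          (∏ i : Fin k,
            (if (p i.succ : ℕ) = (p i.castSucc : ℕ) + 1 then
              b ((p i.castSucc : ℕ) + 1) / (1 + b ((p i.castSucc : ℕ) + 1))
            else if (p i.succ : ℕ) + 1 = (p i.castSucc : ℕ) then
              1 / (1 + b ((p i.castSucc : ℕ) + 1))
            else 0)) *
          ∏ j ∈ Finset.Icc 1 (n - 1),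
            ((1 + b (j + 1)) / (1 + b (j + 1) + a j)) ^
              (Finset.univ.filter (fun i : Fin k => (p i.castSucc : ℕ) = j)).card
        else 0) := by
  have hprod : ∏ j ∈ Icc 1 r, z j = hitSum (spineKernel a b) (Interior n) n r 0 := by
    refine (isHarmonic_prod_riccati ha hb hzn hz).eq ha hb (isHarmonic_hitSum ha hb)
      ?_ ?_ hrn.le
    · simp [hitSum_eq_ite]
    · rw [hitSum_eq_ite le_rfl (by simp) 0, if_neg (by omega)]
      exact prod_eq_zero (mem_Icc.2 ⟨by omega, le_rfl⟩) hzn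
  rw [hprod, hitSum]
  exact tsum_congr fun k => sum_congr rfl fun p _ => ite_pathSum_eq ⟨by omega, by omega⟩ p

/-- Spine random walk lemma: the product `∏_{j=1}^r z_j` of the backward Riccati recursion
equals the expectation, over the birth–death chain started at `r` with up-probability
`b_{j+1}/(1+b_{j+1})` from `j`, of the local-time functional
`1{τ(0) < τ(n)} ∏_{j=1}^{n−1} ((1+b_{j+1})/(1+b_{j+1}+a_j))^{L^j_{τ(0)}}`.
The expectation is written as a sum over all finite paths `p` of length `k` from `r` to `0`
avoiding `0` and `n` strictly before time `k`, weighted by the product of the transition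
probabilities. -/
theorem stmt10 (n r : ℕ) (hn : 2 ≤ n) (hr : 1 ≤ r) (hrn : r < n)
    (a b : ℕ → ℝ) (ha : ∀ j < n, 0 ≤ a j) (hb : ∀ j < n, 0 < b (j + 1))
    (z : ℕ → ℝ) (hzn : z n = 0)
    (hz : ∀ j < n, z j = 1 / (1 + a j + b (j + 1) * (1 - z (j + 1)))) :
    ∏ j ∈ Finset.Icc 1 r, z j =
      ∑' k : ℕ, ∑ p : Fin (k + 1) → Fin (n + 1),
        (if (p 0 : ℕ) = r ∧ (p (Fin.last k) : ℕ) = 0 ∧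
            (∀ i : Fin (k + 1), 0 < (i : ℕ) → (i : ℕ) < k →
              (p i : ℕ) ≠ 0 ∧ (p i : ℕ) ≠ n) then
          (∏ i : Fin k,
            (if (p i.succ : ℕ) = (p i.castSucc : ℕ) + 1 then
              b ((p i.castSucc : ℕ) + 1) / (1 + b ((p i.castSucc : ℕ) + 1))
            else if (p i.succ : ℕ) + 1 = (p i.castSucc : ℕ) then
              1 / (1 + b ((p i.castSucc : ℕ) + 1))
            else 0)) *
          ∏ j ∈ Finset.Icc 1 (n - 1),
            ((1 + b (j + 1)) / (1 + b (j + 1) + a j)) ^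
              (Finset.univ.filter (fun i : Fin k => (p i.castSucc : ℕ) = j)).card
        else 0) :=
  stmt10_general n r hr hrn a b ha hb z hzn hz
end

section
/- Let γ_n and β_n be defined on vertices x with 0 < |x| < n of a rooted tree by the recursions γ_n(x) = (1 + Σ_{i=1}^{d_x} γ_n(x_i))/(λ + Σ_{i=1}^{d_x} β_n(x_i)) and β_n(x) = (Σ_{i=1}^{d_x} β_n(x_i))/(λ + Σ_{i=1}^{d_x} β_n(x_i)), with boundary conditions γ_n(x) = 0 and β_n(x) = 1 for |x| = n. Define Γ_n(x) = Σ_{i=1}^{d_x} γ_n(x_i) and B_n(x) = λ⁻¹ Σ_{i=1}^{d_x} β_n(x_i). Then Γ_n(o) = Σ_{r=1}^{n−1} λ^{−r} Σ_{|u|=r} ∏_{j=1}^{r} (1 + B_n(u_j))⁻¹, where (u_0 = o, u_1, …, u_r = u) is the path from the root to u. -/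
/-!
Writing `γ(y) = λ⁻¹ (1 + B y)⁻¹ (1 + Γ y)` for every vertex `0 < |y| < n`, the recursion becomes
`Γ x = Σᵢ w(xᵢ) (1 + Γ(xᵢ))` with `w = λ⁻¹ (1 + B)⁻¹`, and `Γ = 0` one level above the boundary.
Unrolling it down to level `n` expands `Γ x` as the sum, over all descending paths from `x` of
length `1, …, n - 1 - |x|`, of the product of the weights `w` along the path.
-/

open Finset

@[to_additive sum_Icc_one_eq_sum_range_succ]
theorem prod_Icc_one_eq_prod_range_succ {M : Type*} [CommMonoid M] (f : ℕ → M) (r : ℕ) :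
    ∏ j ∈ Icc 1 r, f j = ∏ j ∈ range r, f (j + 1) := by
  rw [range_eq_Ico, prod_Ico_add' f 0 r 1, zero_add, Ico_add_one_right_eq_Icc]

namespace RootedTree

variable (d : List ℕ → ℕ) {R : Type*} [CommSemiring R]

/-- The words `u` of length `r` such that `x ++ u` is a descendant of `x` in the tree where the
vertex `y` has the children `y ++ [i]`, `i < d y`. -/
def pathsFrom : ℕ → List ℕ → Finset (List ℕ)
  | 0, _ => {[]}
  | r + 1, x => (range (d x)).biUnion fun i => (pathsFrom r (x ++ [i])).image (i :: ·)

theorem mem_pathsFrom {r : ℕ} {x u : List ℕ} :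
    u ∈ pathsFrom d r x ↔ u.length = r ∧ ∀ j < r, u.getD j 0 < d (x ++ u.take j) := by
  induction r generalizing x u with
  | zero => simp [pathsFrom, List.length_eq_zero_iff]
  | succ r ih =>
    cases u with
    | nil => simp [pathsFrom]
    | cons i v =>
      simp only [pathsFrom, mem_biUnion, mem_range, mem_image, List.cons.injEq, ih,
        List.length_cons, Nat.add_right_cancel_iff]
      constructor
      · rintro ⟨i, hi, v, ⟨hlen, hv⟩, rfl, rfl⟩
        refine ⟨hlen, fun j hj => ?_⟩
        cases j with
        | zero => simpa using hi
        | succ j => simpa using hv j (by omega)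
      · rintro ⟨hlen, hv⟩
        refine ⟨i, by simpa using hv 0 (by omega), v, ⟨hlen, fun j hj => ?_⟩, rfl, rfl⟩
        simpa using hv (j + 1) (by omega)

theorem sum_pathsFrom_succ {M : Type*} [AddCommMonoid M] (r : ℕ) (x : List ℕ)
    (f : List ℕ → M) :
    ∑ u ∈ pathsFrom d (r + 1) x, f u =
      ∑ i ∈ range (d x), ∑ v ∈ pathsFrom d r (x ++ [i]), f (i :: v) := by
  rw [pathsFrom, sum_biUnion]
  · exact sum_congr rfl fun i _ => sum_image fun _ _ _ _ h => List.cons_injective h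
  · intro i _ j _ hij
    simp only [Function.onFun, disjoint_left, mem_image]
    rintro _ ⟨_, -, rfl⟩ ⟨_, -, h⟩
    exact hij (List.cons.inj h).1.symm

def pathWeight (w : List ℕ → R) (x u : List ℕ) : R :=
  ∏ j ∈ range u.length, w (x ++ u.take (j + 1))

theorem pathWeight_cons (w : List ℕ → R) (x v : List ℕ) (i : ℕ) :
    pathWeight w x (i :: v) = w (x ++ [i]) * pathWeight w (x ++ [i]) v := by
  rw [pathWeight, List.length_cons, prod_range_succ', mul_comm]
  simp [pathWeight, List.take_succ_cons]

theorem pathWeight_const_mul (a : R) (w : List ℕ → R) (x u : List ℕ) :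
    pathWeight (fun y => a * w y) x u = a ^ u.length * pathWeight w x u := by
  simp only [pathWeight, prod_mul_distrib, prod_const, card_range]

def pathSum (w : List ℕ → R) (r : ℕ) (x : List ℕ) : R :=
  ∑ u ∈ pathsFrom d r x, pathWeight w x u

theorem pathSum_zero (w : List ℕ → R) (x : List ℕ) : pathSum d w 0 x = 1 := by
  simp [pathSum, pathsFrom, pathWeight]

theorem pathSum_succ (w : List ℕ → R) (r : ℕ) (x : List ℕ) :
    pathSum d w (r + 1) x = ∑ i ∈ range (d x), w (x ++ [i]) * pathSum d w r (x ++ [i]) := by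
  simp only [pathSum, sum_pathsFrom_succ, pathWeight_cons, mul_sum]

theorem pathSum_const_mul (a : R) (w : List ℕ → R) (r : ℕ) (x : List ℕ) :
    pathSum d (fun y => a * w y) r x = a ^ r * pathSum d w r x := by
  rw [pathSum, pathSum, mul_sum]
  refine sum_congr rfl fun u hu => ?_
  rw [pathWeight_const_mul, ((mem_pathsFrom d).1 hu).1]

theorem tsum_ite_eq_pathSum [TopologicalSpace R] (w : List ℕ → R) (r : ℕ) (x : List ℕ) :
    ∑' u : List ℕ, (if u.length = r ∧ ∀ j < r, u.getD j 0 < d (x ++ u.take j) then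
      ∏ j ∈ Icc 1 r, w (x ++ u.take j) else 0) = pathSum d w r x := by
  rw [pathSum, tsum_eq_sum (s := pathsFrom d r x)]
  · refine sum_congr rfl fun u hu => ?_
    have hu' := (mem_pathsFrom d).1 hu
    rw [if_pos hu', pathWeight, hu'.1, prod_Icc_one_eq_prod_range_succ]
  · intro u hu
    rw [if_neg (mt (mem_pathsFrom d).2 hu)]

theorem eq_sum_pathSum_of_recursion {N : ℕ} (w Γ : List ℕ → R)
    (hrec : ∀ x : List ℕ, x.length + 1 < N →
      Γ x = ∑ i ∈ range (d x), w (x ++ [i]) * (1 + Γ (x ++ [i])))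
    (hbd : ∀ x : List ℕ, x.length + 1 = N → Γ x = 0) (m : ℕ) (x : List ℕ)
    (hx : x.length + m + 1 = N) :
    Γ x = ∑ r ∈ range m, pathSum d w (r + 1) x := by
  induction m generalizing x with
  | zero => simpa using hbd x (by omega)
  | succ m ih =>
    have hchild (i : ℕ) : 1 + Γ (x ++ [i]) = ∑ r ∈ range (m + 1), pathSum d w r (x ++ [i]) := by
      rw [ih (x ++ [i]) (by simp; omega), sum_range_succ', pathSum_zero, add_comm]
    calc Γ x = ∑ i ∈ range (d x), w (x ++ [i]) * (1 + Γ (x ++ [i])) := hrec x (by omega)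
      _ = ∑ r ∈ range (m + 1), ∑ i ∈ range (d x), w (x ++ [i]) * pathSum d w r (x ++ [i]) := by
        simp only [hchild, mul_sum]
        exact sum_comm
      _ = ∑ r ∈ range (m + 1), pathSum d w (r + 1) x := by simp only [pathSum_succ]

end RootedTree

open RootedTree

theorem stmt12_general (n : ℕ) (hn : 2 ≤ n)
    (lam : ℝ) (hlam : 0 < lam)
    (d : List ℕ → ℕ)
    (β γ : List ℕ → ℝ)
    (hγbd : ∀ x : List ℕ, x.length = n → γ x = 0)
    (hγrec : ∀ x : List ℕ, 0 < x.length → x.length < n →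
      γ x = (1 + ∑ i ∈ Finset.range (d x), γ (x ++ [i])) /
        (lam + ∑ i ∈ Finset.range (d x), β (x ++ [i])))
    (B Γ : List ℕ → ℝ)
    (hB : ∀ x, B x = lam⁻¹ * ∑ i ∈ Finset.range (d x), β (x ++ [i]))
    (hΓ : ∀ x, Γ x = ∑ i ∈ Finset.range (d x), γ (x ++ [i])) :
    Γ [] = ∑ r ∈ Finset.Icc 1 (n - 1), lam⁻¹ ^ r *
      ∑' u : List ℕ,
        (if u.length = r ∧ (∀ j, ∀ h : j < r, u.getD j 0 < d (u.take j)) then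
          ∏ j ∈ Finset.Icc 1 r, (1 + B (u.take j))⁻¹
        else 0) := by
  have hγ (y : List ℕ) (hy₀ : 0 < y.length) (hyn : y.length < n) :
      γ y = lam⁻¹ * (1 + B y)⁻¹ * (1 + Γ y) := by
    rw [hγrec y hy₀ hyn, hB, hΓ]
    field_simp
  have hrec (x : List ℕ) (hx : x.length + 1 < n) :
      Γ x = ∑ i ∈ range (d x), lam⁻¹ * (1 + B (x ++ [i]))⁻¹ * (1 + Γ (x ++ [i])) := by
    rw [hΓ]
    exact sum_congr rfl fun i _ => hγ _ (by simp) (by simp; omega)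
  have hbd (x : List ℕ) (hx : x.length + 1 = n) : Γ x = 0 := by
    rw [hΓ]
    exact sum_eq_zero fun i _ => hγbd _ (by simp; omega)
  rw [eq_sum_pathSum_of_recursion d (fun y => lam⁻¹ * (1 + B y)⁻¹) Γ hrec hbd (n - 1) []
      (by simp; omega),
    ← sum_Icc_one_eq_sum_range_succ (fun r => pathSum d _ r [])]
  refine sum_congr rfl fun r _ => ?_
  rw [pathSum_const_mul, ← tsum_ite_eq_pathSum]
  simp only [List.nil_append]

/-- Iterating the exit-time recursion on a rooted tree (vertices encoded as lists of child
indices): `Γ_n(o) = Σ_{r=1}^{n−1} λ^{−r} Σ_{|u|=r} ∏_{j=1}^{r} (1 + B_n(u_j))⁻¹`. -/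
theorem stmt12 (n : ℕ) (hn : 2 ≤ n)
    (lam : ℝ) (hlam : 0 < lam)
    (d : List ℕ → ℕ) (hd : ∀ x, 1 ≤ d x)
    (β γ : List ℕ → ℝ) (hβnn : ∀ x, 0 ≤ β x)
    (hβbd : ∀ x : List ℕ, x.length = n → β x = 1)
    (hγbd : ∀ x : List ℕ, x.length = n → γ x = 0)
    (hβrec : ∀ x : List ℕ, 0 < x.length → x.length < n →
      β x = (∑ i ∈ Finset.range (d x), β (x ++ [i])) /
        (lam + ∑ i ∈ Finset.range (d x), β (x ++ [i])))
    (hγrec : ∀ x : List ℕ, 0 < x.length → x.length < n →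
      γ x = (1 + ∑ i ∈ Finset.range (d x), γ (x ++ [i])) /
        (lam + ∑ i ∈ Finset.range (d x), β (x ++ [i])))
    (B Γ : List ℕ → ℝ)
    (hB : ∀ x, B x = lam⁻¹ * ∑ i ∈ Finset.range (d x), β (x ++ [i]))
    (hΓ : ∀ x, Γ x = ∑ i ∈ Finset.range (d x), γ (x ++ [i])) :
    Γ [] = ∑ r ∈ Finset.Icc 1 (n - 1), lam⁻¹ ^ r *
      ∑' u : List ℕ,
        (if u.length = r ∧ (∀ j, ∀ h : j < r, u.getD j 0 < d (u.take j)) then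
          ∏ j ∈ Finset.Icc 1 r, (1 + B (u.take j))⁻¹
        else 0) :=
  stmt12_general n hn lam hlam d β γ hγbd hγrec B Γ hB hΓ
end

section
/- Let (M_k)_{k≥1} be a sequence of positive random variables converging a.s. to a positive random variable M_∞ with E[1/M_k] = 1 for all k, and suppose P(1/M_k > t) ≤ e · E[e^{−t M_∞}] for all t > 0 and k. Let ζ be a positive random variable independent of (M_k) with E[ζ] < ∞. Then the family {ζ/M_k}_{k≥1} is uniformly integrable. -/
/-!
Truncate at level `A * B`: where `|ζ X| ≥ A B`, either `|ζ| ≥ A` or `|X| ≥ B`, so independence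
gives `E[|ζ X|; |ζ X| ≥ A B] ≤ E[|ζ|; |ζ| ≥ A] E|X| + E|ζ| E[|X|; |X| ≥ B]`. Hence `ζ X_k` is
uniformly integrable as soon as `X_k = 1/M_k` is. The tails of `1/M_k` are dominated by the
antitone function `h t = e E[exp(-t M_∞)]`, whose integral over `(0, ∞)` is `e E[1/M_∞] ≤ e` by
Fatou, and the layer-cake formula bounds `E[X_k; X_k > B]` by `∫_0^∞ h (max B t) dt`, which tends
to `0` by dominated convergence.
-/

open MeasureTheory ProbabilityTheory Filter Set
open scoped ENNReal NNReal Topology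

theorem lintegral_Ioi_exp_neg_mul {c : ℝ} (hc : 0 < c) :
    ∫⁻ t in Ioi (0 : ℝ), ENNReal.ofReal (Real.exp (-t * c)) = ENNReal.ofReal c⁻¹ := by
  have hc' : -c < 0 := neg_lt_zero.2 hc
  simp_rw [neg_mul, ← mul_neg, mul_comm _ (-c)]
  rw [← ofReal_integral_eq_lintegral_ofReal (integrableOn_exp_mul_Ioi hc' 0)
    (ae_of_all _ fun t => (Real.exp_pos _).le), integral_exp_mul_Ioi hc']
  simp

theorem tendsto_setLIntegral_Ioi_max_atTop {h : ℝ → ℝ≥0∞} (h_anti : Antitone h)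
    (h_int : ∫⁻ t in Ioi (0 : ℝ), h t ≠ ∞) :
    Tendsto (fun B => ∫⁻ t in Ioi (0 : ℝ), h (max B t)) atTop (𝓝 0) := by
  have h_inf : ⨅ B, h B = 0 := by
    by_contra hne
    refine h_int (eq_top_iff.2 ?_)
    calc ∞ = (⨅ B, h B) * volume (Ioi (0 : ℝ)) := by simp [hne]
      _ = ∫⁻ _ in Ioi (0 : ℝ), ⨅ B, h B := (setLIntegral_const _ _).symm
      _ ≤ ∫⁻ t in Ioi (0 : ℝ), h t := lintegral_mono fun t => iInf_le h t
  have h_lim := tendsto_atTop_iInf h_anti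
  rw [h_inf] at h_lim
  have := tendsto_lintegral_filter_of_dominated_convergence (μ := volume.restrict (Ioi (0 : ℝ)))
    (l := atTop) (F := fun B t => h (max B t)) (f := fun _ => 0) h
    (Eventually.of_forall fun B => h_anti.measurable.comp (measurable_const.max measurable_id))
    (Eventually.of_forall fun B => ae_of_all _ fun t => h_anti (le_max_right B t)) h_int
    (ae_of_all _ fun t => h_lim.congr' <| (eventually_ge_atTop t).mono fun B hB => by
      simp [max_eq_left hB])
  simpa using this

theorem enorm_indicator_mul_le (A B : ℝ≥0) (x y : ℝ) :
    ‖{z : ℝ | A * B ≤ ‖z‖₊}.indicator id (x * y)‖ₑ ≤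
      ‖{z : ℝ | A ≤ ‖z‖₊}.indicator id x‖ₑ * ‖y‖ₑ
        + ‖x‖ₑ * ‖{z : ℝ | B ≤ ‖z‖₊}.indicator id y‖ₑ := by
  by_cases hxy : A * B ≤ ‖x * y‖₊
  swap
  · simp [indicator_of_notMem (show x * y ∉ {z : ℝ | A * B ≤ ‖z‖₊} from hxy)]
  rw [indicator_of_mem (show x * y ∈ {z : ℝ | A * B ≤ ‖z‖₊} from hxy), id, enorm_mul]
  by_cases hx : A ≤ ‖x‖₊
  · rw [indicator_of_mem (show x ∈ {z : ℝ | A ≤ ‖z‖₊} from hx), id]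
    exact le_self_add
  · have hy : B ≤ ‖y‖₊ := by
      by_contra hy
      rw [nnnorm_mul] at hxy
      exact (mul_lt_mul'' (not_le.1 hx) (not_le.1 hy) zero_le zero_le).not_ge hxy
    rw [indicator_of_mem (show y ∈ {z : ℝ | B ≤ ‖z‖₊} from hy), id]
    exact le_add_self

section

variable {Ω : Type*} [MeasurableSpace Ω] {μ : Measure Ω}

theorem lintegral_Ioi_lintegral_exp_neg_mul [SFinite μ] {M : Ω → ℝ} (hM : Measurable M)
    (hMpos : ∀ ω, 0 < M ω) :
    ∫⁻ t in Ioi (0 : ℝ), ∫⁻ ω, ENNReal.ofReal (Real.exp (-t * M ω)) ∂μ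
      = ∫⁻ ω, ENNReal.ofReal (M ω)⁻¹ ∂μ := by
  rw [lintegral_lintegral_swap (by fun_prop)]
  exact lintegral_congr fun ω => lintegral_Ioi_exp_neg_mul (hMpos ω)

theorem ofReal_integral_exp_neg_mul [IsFiniteMeasure μ] {M : Ω → ℝ} (hM : Measurable M)
    (hM0 : ∀ ω, 0 ≤ M ω) {t : ℝ} (ht : 0 ≤ t) :
    ENNReal.ofReal (∫ ω, Real.exp (-t * M ω) ∂μ)
      = ∫⁻ ω, ENNReal.ofReal (Real.exp (-t * M ω)) ∂μ := by
  refine ofReal_integral_eq_lintegral_ofReal (Integrable.of_bound (by fun_prop) 1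
    (ae_of_all _ fun ω => ?_)) (ae_of_all _ fun ω => (Real.exp_pos _).le)
  rw [Real.norm_of_nonneg (Real.exp_pos _).le, Real.exp_le_one_iff, neg_mul, neg_nonpos]
  exact mul_nonneg ht (hM0 ω)

theorem lintegral_ofReal_le_of_tendsto {f : ℕ → Ω → ℝ} {g : Ω → ℝ} {c : ℝ≥0∞}
    (hf : ∀ n, AEMeasurable (f n) μ)
    (hlim : ∀ᵐ ω ∂μ, Tendsto (fun n => f n ω) atTop (𝓝 (g ω)))
    (hbound : ∀ n, ∫⁻ ω, ENNReal.ofReal (f n ω) ∂μ ≤ c) :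
    ∫⁻ ω, ENNReal.ofReal (g ω) ∂μ ≤ c :=
  calc ∫⁻ ω, ENNReal.ofReal (g ω) ∂μ
      = ∫⁻ ω, liminf (fun n => ENNReal.ofReal (f n ω)) atTop ∂μ :=
        lintegral_congr_ae <| hlim.mono fun _ h => (ENNReal.tendsto_ofReal h).liminf_eq.symm
    _ ≤ liminf (fun n => ∫⁻ ω, ENNReal.ofReal (f n ω) ∂μ) atTop :=
        lintegral_liminf_le' fun n => (hf n).ennreal_ofReal
    _ ≤ c := liminf_le_of_frequently_le' (Frequently.of_forall hbound)

theorem lintegral_ofReal_indicator_le_of_tail_le {X : Ω → ℝ} (hX : Measurable X) {h : ℝ → ℝ≥0∞}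
    (htail : ∀ t, 0 < t → μ {ω | t < X ω} ≤ h t) {B : ℝ} (hB : 0 ≤ B) :
    ∫⁻ ω, ENNReal.ofReal ({ω | B < X ω}.indicator X ω) ∂μ
      ≤ ∫⁻ t in Ioi (0 : ℝ), h (max B t) := by
  have hnn : 0 ≤ᵐ[μ] {ω | B < X ω}.indicator X :=
    ae_of_all _ <| indicator_nonneg fun ω hω => hB.trans (le_of_lt hω)
  rw [lintegral_eq_lintegral_meas_lt μ hnn
    ((hX.indicator (measurableSet_lt measurable_const hX)).aemeasurable)]
  refine setLIntegral_mono' measurableSet_Ioi fun t (ht : 0 < t) => ?_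
  refine (measure_mono fun ω hω => ?_).trans (htail _ (ht.trans_le (le_max_right B t)))
  by_cases hBω : B < X ω
  · simp only [mem_ofPred_eq, indicator_of_mem (show ω ∈ {ω | B < X ω} from hBω)] at hω
    exact max_lt hBω hω
  · simp only [mem_ofPred_eq, indicator_of_notMem (show ω ∉ {ω | B < X ω} from hBω)] at hω
    exact absurd ht hω.not_gt

theorem uniformIntegrable_of_tail_le {ι : Type*} [IsFiniteMeasure μ] {X : ι → Ω → ℝ}
    (hX : ∀ i, Measurable (X i)) (hX0 : ∀ i ω, 0 ≤ X i ω)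
    {h : ℝ → ℝ≥0∞} (h_anti : Antitone h) (h_int : ∫⁻ t in Ioi (0 : ℝ), h t ≠ ∞)
    (htail : ∀ i t, 0 < t → μ {ω | t < X i ω} ≤ h t) :
    UniformIntegrable X 1 μ := by
  refine uniformIntegrable_of le_rfl ENNReal.one_ne_top (fun i => (hX i).aestronglyMeasurable)
    fun ε hε => ?_
  obtain ⟨B, hB, hBpos⟩ := (((tendsto_setLIntegral_Ioi_max_atTop h_anti h_int).eventually
    (gt_mem_nhds (ENNReal.ofReal_pos.2 hε))).and (eventually_gt_atTop 0)).exists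
  refine ⟨(2 * B).toNNReal, fun i => ?_⟩
  rw [eLpNorm_one_eq_lintegral_enorm]
  refine le_trans (lintegral_mono fun ω => ?_)
    ((lintegral_ofReal_indicator_le_of_tail_le (hX i) (htail i) hBpos.le).trans hB.le)
  by_cases hω : (2 * B).toNNReal ≤ ‖X i ω‖₊
  · have hBω : B < X i ω := by
      rw [← NNReal.coe_le_coe, Real.coe_toNNReal _ (by positivity), coe_nnnorm,
        Real.norm_of_nonneg (hX0 i ω)] at hω
      linarith
    rw [indicator_of_mem (show ω ∈ {ω | (2 * B).toNNReal ≤ ‖X i ω‖₊} from hω),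
      indicator_of_mem (show ω ∈ {ω | B < X i ω} from hBω), Real.enorm_of_nonneg (hX0 i ω)]
  · rw [indicator_of_notMem (show ω ∉ {ω | (2 * B).toNNReal ≤ ‖X i ω‖₊} from hω), enorm_zero]
    exact zero_le

theorem UniformIntegrable.mul_of_indepFun {ι : Type*} [IsFiniteMeasure μ] {ζ : Ω → ℝ}
    {Y : ι → Ω → ℝ} (hY : UniformIntegrable Y 1 μ) (hζ : Integrable ζ μ)
    (hind : ∀ i, IndepFun ζ (Y i) μ) :
    UniformIntegrable (fun i => ζ * Y i) 1 μ := by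
  obtain ⟨hYm, -, K, hK⟩ := id hY
  set I := ∫⁻ ω, ‖ζ ω‖ₑ ∂μ
  have hI : I ≠ ∞ := hζ.2.ne
  refine uniformIntegrable_of le_rfl ENNReal.one_ne_top
    (fun i => hζ.aestronglyMeasurable.mul (hYm i)) fun ε hε => ?_
  set δ := ε / (K + I.toReal + 1)
  have hδ : 0 < δ := div_pos hε (by positivity)
  obtain ⟨A, hA⟩ := (uniformIntegrable_const (ι := Unit) le_rfl ENNReal.one_ne_top
    (memLp_one_iff_integrable.2 hζ)).spec one_ne_zero ENNReal.one_ne_top hδ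
  obtain ⟨B, hB⟩ := hY.spec one_ne_zero ENNReal.one_ne_top hδ
  refine ⟨A * B, fun i => ?_⟩
  have hφ (C : ℝ≥0) : Measurable fun z : ℝ => ‖{z : ℝ | C ≤ ‖z‖₊}.indicator id z‖ₑ :=
    (measurable_id.indicator (measurableSet_le measurable_const measurable_nnnorm)).enorm
  have hfactor (φ ψ : ℝ → ℝ≥0∞) (hφ : Measurable φ) (hψ : Measurable ψ) :
      ∫⁻ ω, φ (ζ ω) * ψ (Y i ω) ∂μ = (∫⁻ ω, φ (ζ ω) ∂μ) * ∫⁻ ω, ψ (Y i ω) ∂μ :=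
    lintegral_mul_eq_lintegral_mul_lintegral_of_indepFun''
      (hφ.comp_aemeasurable hζ.aemeasurable) (hψ.comp_aemeasurable (hYm i).aemeasurable)
      ((hind i).comp hφ hψ)
  rw [eLpNorm_one_eq_lintegral_enorm]
  calc ∫⁻ ω, ‖{ω | A * B ≤ ‖(ζ * Y i) ω‖₊}.indicator (ζ * Y i) ω‖ₑ ∂μ
      ≤ ∫⁻ ω, (‖{z : ℝ | A ≤ ‖z‖₊}.indicator id (ζ ω)‖ₑ * ‖Y i ω‖ₑ
          + ‖ζ ω‖ₑ * ‖{z : ℝ | B ≤ ‖z‖₊}.indicator id (Y i ω)‖ₑ) ∂μ :=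
        lintegral_mono fun ω => enorm_indicator_mul_le A B (ζ ω) (Y i ω)
    _ = eLpNorm ({ω | A ≤ ‖ζ ω‖₊}.indicator ζ) 1 μ * eLpNorm (Y i) 1 μ
          + I * eLpNorm ({ω | B ≤ ‖Y i ω‖₊}.indicator (Y i)) 1 μ := by
        rw [lintegral_add_left'
            (f := fun ω => ‖{z : ℝ | A ≤ ‖z‖₊}.indicator id (ζ ω)‖ₑ * ‖Y i ω‖ₑ)
            (((hφ A).comp_aemeasurable hζ.aemeasurable).mul (hYm i).aemeasurable.enorm),
          hfactor _ _ (hφ A) measurable_enorm, hfactor _ _ measurable_enorm (hφ B)]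
        simp only [eLpNorm_one_eq_lintegral_enorm]
        rfl
    _ ≤ ENNReal.ofReal δ * K + ENNReal.ofReal I.toReal * ENNReal.ofReal δ := by
        rw [ENNReal.ofReal_toReal hI]
        gcongr
        exacts [hA (), hK i, hB i]
    _ = ENNReal.ofReal (δ * (K + I.toReal)) := by
        rw [ENNReal.ofReal_mul hδ.le, ENNReal.ofReal_add K.coe_nonneg ENNReal.toReal_nonneg,
          ENNReal.ofReal_coe_nnreal, mul_add, mul_comm (ENNReal.ofReal I.toReal)]
    _ ≤ ENNReal.ofReal ε := by
        refine ENNReal.ofReal_le_ofReal ?_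
        rw [div_mul_eq_mul_div, div_le_iff₀ (by positivity)]
        nlinarith

theorem uniformIntegrable_of_tail_le_laplace {ι : Type*} [IsFiniteMeasure μ] {X : ι → Ω → ℝ}
    (hX : ∀ i, Measurable (X i)) (hX0 : ∀ i ω, 0 ≤ X i ω) {L : Ω → ℝ} (hL : Measurable L)
    (hLpos : ∀ ω, 0 < L ω) (hL_inv : ∫⁻ ω, ENNReal.ofReal (L ω)⁻¹ ∂μ ≠ ∞) {c : ℝ} (hc : 0 ≤ c)
    (htail : ∀ i t, 0 < t → μ {ω | t < X i ω} ≤ ENNReal.ofReal (c * ∫ ω, Real.exp (-t * L ω) ∂μ)) :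
    UniformIntegrable X 1 μ := by
  set h : ℝ → ℝ≥0∞ := fun t => ENNReal.ofReal c * ∫⁻ ω, ENNReal.ofReal (Real.exp (-t * L ω)) ∂μ
  have h_anti : Antitone h := fun s t hst => by
    simp only [h]
    gcongr with ω
    exact (hLpos ω).le
  have h_int : ∫⁻ t in Ioi 0, h t ≠ ∞ := by
    rw [lintegral_const_mul' _ _ ENNReal.ofReal_ne_top,
      lintegral_Ioi_lintegral_exp_neg_mul hL hLpos]
    exact ENNReal.mul_ne_top ENNReal.ofReal_ne_top hL_inv
  refine uniformIntegrable_of_tail_le hX hX0 h_anti h_int fun i t ht => ?_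
  simp only [h]
  rw [← ofReal_integral_exp_neg_mul hL (fun ω => (hLpos ω).le) ht.le, ← ENNReal.ofReal_mul hc]
  exact htail i t ht

end

theorem stmt18_general {Ω : Type*} [m0 : MeasurableSpace Ω] (μ : Measure Ω) [IsProbabilityMeasure μ]
    (M : ℕ → Ω → ℝ) (Minf ζ : Ω → ℝ)
    (hMmeas : ∀ k, Measurable (M k)) (hMinfmeas : Measurable Minf)
    (hMpos : ∀ k ω, 0 < M k ω) (hMinfpos : ∀ ω, 0 < Minf ω)
    (hconv : ∀ᵐ ω ∂μ, Filter.Tendsto (fun k => M k ω) Filter.atTop (nhds (Minf ω)))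
    (hmean : ∀ k, ∫ ω, (M k ω)⁻¹ ∂μ = 1)
    (htail : ∀ k, ∀ t : ℝ, 0 < t →
      μ {ω | t < (M k ω)⁻¹} ≤
        ENNReal.ofReal (Real.exp 1 * ∫ ω, Real.exp (-t * Minf ω) ∂μ))
    (hζint : Integrable ζ μ)
    (hindep : Indep (MeasurableSpace.comap ζ inferInstance)
      (⨆ k, MeasurableSpace.comap (M k) inferInstance) μ) :
    UniformIntegrable (fun k ω => ζ ω / M k ω) 1 μ := by
  have hinv_mean (k : ℕ) : ∫⁻ ω, ENNReal.ofReal (M k ω)⁻¹ ∂μ = 1 := by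
    rw [← ofReal_integral_eq_lintegral_ofReal
      (Integrable.of_integral_ne_zero (by rw [hmean k]; exact one_ne_zero))
      (ae_of_all _ fun ω => (inv_pos.2 (hMpos k ω)).le), hmean k, ENNReal.ofReal_one]
  have hinv_lim : ∫⁻ ω, ENNReal.ofReal (Minf ω)⁻¹ ∂μ ≤ 1 :=
    lintegral_ofReal_le_of_tendsto (fun k => (hMmeas k).inv.aemeasurable)
      (hconv.mono fun ω h => h.inv₀ (hMinfpos ω).ne') fun k => (hinv_mean k).le
  have hUI : UniformIntegrable (fun k ω => (M k ω)⁻¹) 1 μ :=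
    uniformIntegrable_of_tail_le_laplace (fun k => (hMmeas k).inv)
      (fun k ω => (inv_pos.2 (hMpos k ω)).le) hMinfmeas hMinfpos
      (hinv_lim.trans_lt ENNReal.one_lt_top).ne (Real.exp_pos 1).le htail
  have hind (k : ℕ) : IndepFun ζ (fun ω => (M k ω)⁻¹) μ :=
    ((IndepFun_iff_Indep _ _ _).2 (indep_of_indep_of_le_right hindep
      (le_iSup (fun k => MeasurableSpace.comap (M k) inferInstance) k))).comp
      measurable_id measurable_inv
  simp only [div_eq_mul_inv]
  exact UniformIntegrable.mul_of_indepFun hUI hζint hind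

/-- Uniform integrability of `ζ/M_k`: if `M_k > 0` converge a.s. to `M_∞ > 0`,
`E[1/M_k] = 1`, the tail bound `P(1/M_k > t) ≤ e·E[e^{−t M_∞}]` holds, and `ζ > 0` is
integrable and independent of the family `(M_k)`, then `{ζ/M_k}` is uniformly
integrable. -/
theorem stmt18 {Ω : Type*} [m0 : MeasurableSpace Ω] (μ : Measure Ω) [IsProbabilityMeasure μ]
    (M : ℕ → Ω → ℝ) (Minf ζ : Ω → ℝ)
    (hMmeas : ∀ k, Measurable (M k)) (hMinfmeas : Measurable Minf)
    (hζmeas : Measurable ζ)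
    (hMpos : ∀ k ω, 0 < M k ω) (hMinfpos : ∀ ω, 0 < Minf ω)
    (hconv : ∀ᵐ ω ∂μ, Filter.Tendsto (fun k => M k ω) Filter.atTop (nhds (Minf ω)))
    (hmean : ∀ k, ∫ ω, (M k ω)⁻¹ ∂μ = 1)
    (htail : ∀ k, ∀ t : ℝ, 0 < t →
      μ {ω | t < (M k ω)⁻¹} ≤
        ENNReal.ofReal (Real.exp 1 * ∫ ω, Real.exp (-t * Minf ω) ∂μ))
    (hζpos : ∀ ω, 0 < ζ ω) (hζint : Integrable ζ μ)
    (hindep : Indep (MeasurableSpace.comap ζ inferInstance)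
      (⨆ k, MeasurableSpace.comap (M k) inferInstance) μ) :
    UniformIntegrable (fun k ω => ζ ω / M k ω) 1 μ :=
  stmt18_general (m0 := m0) μ M Minf ζ hMmeas hMinfmeas hMpos hMinfpos hconv hmean htail hζint
    hindep
end
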